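/- For every expression E on n variables that is not fully normalized, there is a unique word w = α_{i_1}α_{i_2}⋯α_{i_s} with non-increasing indices i_1 ≥ i_2 ≥ ⋯ ≥ i_s such that applying α_{i_s}, then α_{i_{s-1}}, …, then α_{i_1} transforms E into the fully normalized expression I_n. -/

import Mathlib

/-- Binary trees: expressions in a category with multiplication. -/
inductive BT : Type
  | leaf : BT
  | node : BT → BT → BT
deriving DecidableEq

namespace BT

/-- number of leaves (variables) of an expression -/
def leaves : BT → ℕ
  | leaf => 1
  | node l r => leaves l + leaves r

/-- `stab i t` is `t` right-stabilized `i` times: `(t ⊗_i I)`. -/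
def stab : ℕ → BT → BT
  | 0, t => t
  | n+1, t => node (stab n t) leaf

/-- semi-normalized: of the form `(F ⊗ I)` -/
def IsSemi (t : BT) : Prop := ∃ f, t = node f leaf

/-- fully normalized: a left comb, i.e. an iterated right stabilization of `I` -/
def IsComb (t : BT) : Prop := ∃ n, t = stab n leaf

/-- The move `α_i`: `α_0` reassociates `(H ⊗ (K ⊗ L))` to `((H ⊗ K) ⊗ L)` at the
root, and `α_{i+1} (N ⊗ I) = (α_i N) ⊗ I`. -/
inductive Alpha : ℕ → BT → BT → Prop
  | base (H K L : BT) : Alpha 0 (node H (node K L)) (node (node H K) L)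
  | step {i N N'} : Alpha i N N' → Alpha (i+1) (node N leaf) (node N' leaf)

end BT

/-- `Path [i₁, …, iₛ] E F` : the word `α_{i₁} α_{i₂} ⋯ α_{iₛ}` defines a path
from `E` to `F`, the moves being applied right to left (`α_{iₛ}` first). -/
inductive BT.Path : List ℕ → BT → BT → Prop
  | nil (E : BT) : BT.Path [] E E
  | cons {i : ℕ} {l : List ℕ} {E M F : BT} :
      BT.Path l E M → BT.Alpha i M F → BT.Path (i :: l) E F

/-!
Each `α`-move is forced: a tree that is not a left comb admits exactly one move, namely
`α_k` where `k` is the number of right stabilizations `(· ⊗ I)` around the tree, and this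
number can only grow under a move. The weight `w(leaf) = 1`, `w(l ⊗ r) = w l + 2 w r` strictly
drops under every move, so the forced moves reach the left comb on the same leaves. Hence the
normalizing word exists, is unique among all words, and its indices are automatically
non-increasing.
-/

namespace BT

def weight : BT → ℕ
  | leaf => 1
  | node l r => weight l + 2 * weight r

def stabDepth : BT → ℕ
  | node t leaf => stabDepth t + 1
  | _ => 0

lemma one_le_weight : ∀ t : BT, 1 ≤ weight t
  | leaf => le_rfl
  | node l _ => (one_le_weight l).trans (Nat.le_add_right _ _)

@[simp]
lemma leaves_stab_leaf (n : ℕ) : leaves (stab n leaf) = n + 1 := by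
  induction n with
  | zero => rfl
  | succ n ih => simp [stab, leaves, ih]

namespace Alpha

variable {i j : ℕ} {E F G : BT}

lemma determ (hF : Alpha i E F) (hG : Alpha j E G) : i = j ∧ F = G := by
  induction hF generalizing j G with
  | base => cases hG; exact ⟨rfl, rfl⟩
  | step _ ih =>
    cases hG with
    | step hG => obtain ⟨rfl, rfl⟩ := ih hG; exact ⟨rfl, rfl⟩

lemma weight_lt (h : Alpha i E F) : weight F < weight E := by
  induction h with
  | base _ _ L => have := one_le_weight L; simp only [weight]; omega
  | step _ ih => simp only [weight]; omega

lemma leaves_eq (h : Alpha i E F) : leaves F = leaves E := by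
  induction h with
  | base => simp only [leaves]; omega
  | step _ ih => simp only [leaves, ih]

lemma stabDepth_eq (h : Alpha i E F) : stabDepth E = i := by
  induction h with
  | base => rfl
  | step _ ih => simp [stabDepth, ih]

lemma le_stabDepth (h : Alpha i E F) : i ≤ stabDepth F := by
  induction h with
  | base => exact Nat.zero_le _
  | step _ ih => simpa [stabDepth] using ih

end Alpha

lemma IsComb.not_alpha {i : ℕ} {E F : BT} (hE : IsComb E) : ¬ Alpha i E F := by
  obtain ⟨n, rfl⟩ := hE
  induction n generalizing i F with
  | zero => rintro ⟨⟩
  | succ n ih => rintro (_ | h); exact ih h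

lemma exists_alpha_of_not_isComb : ∀ {E : BT}, ¬ IsComb E → ∃ i F, Alpha i E F
  | leaf, hE => absurd ⟨0, rfl⟩ hE
  | node _ (node K L), _ => ⟨0, _, Alpha.base _ K L⟩
  | node H leaf, hE => by
    have hH : ¬ IsComb H := fun ⟨n, hn⟩ => hE ⟨n + 1, by rw [hn]; rfl⟩
    obtain ⟨i, F, h⟩ := exists_alpha_of_not_isComb hH
    exact ⟨i + 1, _, h.step⟩

namespace Path

variable {l l' : List ℕ} {i : ℕ} {E F : BT}

lemma append_singleton_iff :
    Path (l ++ [i]) E F ↔ ∃ M, Alpha i E M ∧ Path l M F := by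
  induction l generalizing F with
  | nil =>
    constructor
    · rintro (_ | ⟨(_ | _), h⟩); exact ⟨F, h, nil F⟩
    · rintro ⟨M, h, (_ | _)⟩; exact cons (nil E) h
  | cons j l ih =>
    constructor
    · rintro (_ | ⟨hp, hj⟩)
      obtain ⟨M, h, hp⟩ := ih.1 hp
      exact ⟨M, h, cons hp hj⟩
    · rintro ⟨M, h, (_ | ⟨hp, hj⟩)⟩
      exact cons (ih.2 ⟨M, h, hp⟩) hj

lemma eq_nil_of_isComb (h : Path l E F) (hE : IsComb E) : l = [] := by
  rcases List.eq_nil_or_concat' l with rfl | ⟨l, i, rfl⟩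
  · rfl
  · obtain ⟨M, hM, -⟩ := append_singleton_iff.1 h
    exact absurd hM hE.not_alpha

lemma eq_of_isComb (h : Path l E F) (h' : Path l' E F) (hF : IsComb F) : l = l' := by
  induction l using List.reverseRecOn generalizing E l' with
  | nil =>
    cases h
    exact (h'.eq_nil_of_isComb hF).symm
  | append_singleton l i ih =>
    obtain ⟨M, hM, hp⟩ := append_singleton_iff.1 h
    rcases List.eq_nil_or_concat' l' with rfl | ⟨l', j, rfl⟩
    · cases h'
      exact absurd hM hF.not_alpha
    · obtain ⟨M', hM', hp'⟩ := append_singleton_iff.1 h'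
      obtain ⟨rfl, rfl⟩ := hM.determ hM'
      rw [ih hp hp']

lemma pairwise_ge_and_le_stabDepth (h : Path l E F) :
    l.Pairwise (· ≥ ·) ∧ ∀ j ∈ l, j ≤ stabDepth F := by
  induction h with
  | nil => simp
  | cons _ hA ih =>
    obtain ⟨hl, hle⟩ := ih
    have hi := hA.stabDepth_eq
    refine ⟨List.pairwise_cons.2 ⟨fun j hj => hi ▸ hle j hj, hl⟩, ?_⟩
    simp only [List.mem_cons, forall_eq_or_imp]
    exact ⟨hA.le_stabDepth, fun j hj => (hle j hj).trans (hi ▸ hA.le_stabDepth)⟩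

lemma pairwise_ge (h : Path l E F) : l.Pairwise (· ≥ ·) :=
  h.pairwise_ge_and_le_stabDepth.1

end Path

theorem exists_path_stab_leaf (E : BT) : ∃ l, Path l E (stab (E.leaves - 1) leaf) := by
  by_cases hE : IsComb E
  · obtain ⟨n, rfl⟩ := hE
    exact ⟨[], by simpa using Path.nil _⟩
  · obtain ⟨i, F, h⟩ := exists_alpha_of_not_isComb hE
    obtain ⟨l, hl⟩ := exists_path_stab_leaf F
    rw [h.leaves_eq] at hl
    exact ⟨l ++ [i], Path.append_singleton_iff.2 ⟨F, h, hl⟩⟩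
termination_by weight E
decreasing_by exact h.weight_lt

end BT

theorem unique_normalizing_word_general (E : BT) :
    ∃! l : List ℕ, l.Pairwise (· ≥ ·) ∧
      BT.Path l E (BT.stab (E.leaves - 1) BT.leaf) := by
  obtain ⟨l, hl⟩ := BT.exists_path_stab_leaf E
  exact ⟨l, ⟨hl.pairwise_ge, hl⟩, fun l' hl' => hl'.2.eq_of_isComb hl ⟨_, rfl⟩⟩

/-- Every expression `E` on `n` variables that is not fully normalized is
transformed into `Iₙ` by a unique word `α_{i₁} ⋯ α_{iₛ}` with non-increasing
indices `i₁ ≥ i₂ ≥ ⋯ ≥ iₛ`. -/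
theorem unique_normalizing_word (E : BT) (hE : ¬ BT.IsComb E) :
    ∃! l : List ℕ, l.Pairwise (· ≥ ·) ∧
      BT.Path l E (BT.stab (E.leaves - 1) BT.leaf) :=
  unique_normalizing_word_general E
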